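/- arXiv:cs/0607082 — 2 statements merged into one kernel-verified Lean document; each statement's English description precedes it below -/
import Mathlib

section
/- Let h, k ≥ 2 be integers, let w = a^h b^k, and for n ≥ 1 let S_n = a^h (a^{2h} b^{2k}) (a b a^{h-1} b^{k-1})^n (a^{2h} b^{2k}) b^k. Then for all integers i, j ≥ 1, S_i ⊢*_{{w}} S_j holds if and only if i = j. -/
namespace ShuffleWqo

inductive AB : Type
  | a : AB
  | b : AB
  deriving DecidableEq

open AB

/-- The word `a^n`. -/
def wa (n : ℕ) : List AB := List.replicate n a

/-- The word `b^n`. -/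
def wb (n : ℕ) : List AB := List.replicate n b

/-- Concatenation power of a word: `npow u e = u^e`. -/
def npow (u : List AB) : ℕ → List AB
  | 0 => []
  | n + 1 => u ++ npow u n

/-- `Shuffle u v w` means `w` is a shuffle of `u` and `v`. -/
inductive Shuffle {α : Type*} : List α → List α → List α → Prop
  | nil : Shuffle [] [] []
  | left {x : α} {u v w : List α} : Shuffle u v w → Shuffle (x :: u) v (x :: w)
  | right {x : α} {u v w : List α} : Shuffle u v w → Shuffle u (x :: v) (x :: w)

/-- One derivation step: `w` is obtained from `v` by shuffling in a word of `I`. -/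
def Derives {α : Type*} (I : Set (List α)) (v w : List α) : Prop :=
  ∃ u ∈ I, Shuffle v u w

/-- The reflexive-transitive closure `⊢*_I`. -/
def DerivesStar {α : Type*} (I : Set (List α)) : List α → List α → Prop :=
  Relation.ReflTransGen (Derives I)

/-- The shuffle closure `LL(I)` of a set of words `I`. -/
def LL {α : Type*} (I : Set (List α)) : Set (List α) := { w | DerivesStar I [] w }

/-- `r` is a well quasi-order on the language `L`. -/
def IsWqoOn {α : Type*} (r : List α → List α → Prop) (L : Set (List α)) : Prop :=
  ∀ f : ℕ → List α, (∀ n, f n ∈ L) → ∃ i j, i < j ∧ r (f i) (f j)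

/-- The sequence `S_n` associated with `w = a^h b^k`. -/
def S2 (h k n : ℕ) : List AB :=
  wa h ++ (wa (2*h) ++ wb (2*k)) ++ npow ([a, b] ++ wa (h-1) ++ wb (k-1)) n ++
    (wa (2*h) ++ wb (2*k)) ++ wb k

/-! ### Auxiliary: letter counts -/

def cnt (x : AB) : List AB → ℕ
  | [] => 0
  | y :: l => cnt x l + (if y = x then 1 else 0)

@[simp] lemma cnt_nil (x : AB) : cnt x [] = 0 := rfl

@[simp] lemma cnt_cons (x y : AB) (l : List AB) :
    cnt x (y :: l) = cnt x l + (if y = x then 1 else 0) := rfl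

@[simp] lemma cnt_append (x : AB) (l₁ l₂ : List AB) :
    cnt x (l₁ ++ l₂) = cnt x l₁ + cnt x l₂ := by
  induction l₁ with
  | nil => simp
  | cons y l ih => simp [ih]; omega

@[simp] lemma cnt_replicate (x y : AB) (n : ℕ) :
    cnt x (List.replicate n y) = if y = x then n else 0 := by
  induction n with
  | zero => simp
  | succ n ih => simp [List.replicate_succ, ih]; split <;> omega

@[simp] lemma cnt_wa_a (n : ℕ) : cnt a (wa n) = n := by simp [wa]
@[simp] lemma cnt_wa_b (n : ℕ) : cnt b (wa n) = 0 := by simp [wa]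
@[simp] lemma cnt_wb_a (n : ℕ) : cnt a (wb n) = 0 := by simp [wb]
@[simp] lemma cnt_wb_b (n : ℕ) : cnt b (wb n) = n := by simp [wb]

@[simp] lemma cnt_npow (x : AB) (u : List AB) (n : ℕ) :
    cnt x (npow u n) = n * cnt x u := by
  induction n with
  | zero => simp [npow]
  | succ n ih => simp [npow, ih]; ring

/-! ### Shuffle basics -/

lemma shuffle_nil_right : ∀ v : List AB, Shuffle v [] v := by
  intro v
  induction v with
  | nil => exact Shuffle.nil
  | cons x l ih => exact Shuffle.left ih

lemma shuffle_cnt {u v w : List AB} (h : Shuffle u v w) (x : AB) :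
    cnt x w = cnt x u + cnt x v := by
  induction h with
  | nil => simp
  | left _ ih => simp [ih]; omega
  | right _ ih => simp [ih]; omega

lemma shuffle_split {v t w w₁ w₂ : List AB} (hs : Shuffle v t w) (hw : w = w₁ ++ w₂) :
    ∃ v₁ v₂ t₁ t₂, v = v₁ ++ v₂ ∧ t = t₁ ++ t₂ ∧ Shuffle v₁ t₁ w₁ ∧ Shuffle v₂ t₂ w₂ := by
  induction w₁ generalizing v t w with
  | nil =>
    exact ⟨[], v, [], t, rfl, rfl, Shuffle.nil, by simpa [hw] using hs⟩
  | cons x w₁' ih =>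
    subst hw
    cases hs with
    | left h' =>
      obtain ⟨v₁, v₂, t₁, t₂, hv, ht, h1, h2⟩ := ih h' rfl
      exact ⟨x :: v₁, v₂, t₁, t₂, by simp [hv], ht, Shuffle.left h1, h2⟩
    | right h' =>
      obtain ⟨v₁, v₂, t₁, t₂, hv, ht, h1, h2⟩ := ih h' rfl
      exact ⟨v₁, v₂, x :: t₁, t₂, hv, by simp [ht], Shuffle.right h1, h2⟩

lemma shuffle_assoc {s t v u v' : List AB} (h1 : Shuffle s t v) (h2 : Shuffle v u v') :
    ∃ t', Shuffle t u t' ∧ Shuffle s t' v' := by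
  induction h2 generalizing s t with
  | nil =>
    cases h1
    exact ⟨[], Shuffle.nil, Shuffle.nil⟩
  | @left x v₀ u₀ w₀ h' ih =>
    cases h1 with
    | left hst =>
      obtain ⟨t', ha, hb⟩ := ih hst
      exact ⟨t', ha, Shuffle.left hb⟩
    | right hst =>
      obtain ⟨t', ha, hb⟩ := ih hst
      exact ⟨x :: t', Shuffle.left ha, Shuffle.right hb⟩
  | @right x v₀ u₀ w₀ h' ih =>
    obtain ⟨t', ha, hb⟩ := ih h1
    exact ⟨x :: t', Shuffle.right ha, Shuffle.right hb⟩


/-! ### The prefix condition on inserted words -/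

/-- Any word obtained by iteratively shuffling copies of `a^h b^k` together satisfies:
every prefix with more than `n*k` letters `b` has at least `(n+1)*h` letters `a`. -/
def Pcond (h k : ℕ) (t : List AB) : Prop :=
  ∀ t₁ t₂ : List AB, t = t₁ ++ t₂ → ∀ n : ℕ, n * k < cnt b t₁ → (n + 1) * h ≤ cnt a t₁

lemma pcond_nil (h k : ℕ) : Pcond h k [] := by
  intro t₁ t₂ ht n hn
  have : t₁ = [] := by
    cases t₁ with
    | nil => rfl
    | cons x l => simp at ht
  simp [this] at hn

/-- Splitting `a^m b^n` as `e₁ ++ e₂`: count structure of the prefix `e₁`. -/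
lemma repl_append_split {m n : ℕ} {e₁ e₂ : List AB}
    (h : wa m ++ wb n = e₁ ++ e₂) :
    (cnt b e₁ = 0 ∧ cnt a e₁ ≤ m) ∨ (cnt a e₁ = m ∧ cnt b e₁ ≤ n) := by
  rcases List.append_eq_append_iff.1 h with ⟨c, hc1, hc2⟩ | ⟨c, hc1, hc2⟩
  ·
    right
    have h1 : cnt a e₁ = m := by
      have := congrArg (cnt a) hc1
      have h2 := congrArg (cnt a) hc2
      simp at this h2
      omega
    have h2 : cnt b e₁ ≤ n := by
      have := congrArg (cnt b) hc1
      have h2 := congrArg (cnt b) hc2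
      simp at this h2
      omega
    exact ⟨h1, h2⟩
  · left
    have h1 := congrArg (cnt b) hc1
    have h2 := congrArg (cnt a) hc1
    simp at h1 h2
    omega

lemma pcond_step {h k : ℕ} (hh : 1 ≤ h) {t t' : List AB} (hP : Pcond h k t)
    (hs : Shuffle t (wa h ++ wb k) t') : Pcond h k t' := by
  intro t₁' t₂' ht' n hn
  obtain ⟨τ₁, τ₂, μ₁, μ₂, hτ, hμ, h1, h2⟩ := shuffle_split hs ht'
  have ca1 : cnt a t₁' = cnt a τ₁ + cnt a μ₁ := shuffle_cnt h1 a
  have cb1 : cnt b t₁' = cnt b τ₁ + cnt b μ₁ := shuffle_cnt h1 b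
  rcases repl_append_split hμ with ⟨hb0, _⟩ | ⟨hah, hbk⟩
  · have : n * k < cnt b τ₁ := by omega
    have := hP τ₁ τ₂ hτ n this
    omega
  · cases n with
    | zero =>
      have : 1 * h ≤ h := by omega
      omega
    | succ n' =>
      have : n' * k < cnt b τ₁ := by
        have : (n' + 1) * k = n' * k + k := by ring
        omega
      have := hP τ₁ τ₂ hτ n' this
      have e : (n' + 1 + 1) * h = (n' + 1) * h + h := by ring
      omega

lemma derives_star_shuffle {h k : ℕ} (hh : 1 ≤ h) {v w : List AB}
    (hd : DerivesStar {wa h ++ wb k} v w) :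
    ∃ t, Shuffle v t w ∧ Pcond h k t := by
  induction hd with
  | refl => exact ⟨[], shuffle_nil_right v, pcond_nil h k⟩
  | tail _ hstep ih =>
    obtain ⟨t, hsh, hP⟩ := ih
    obtain ⟨u, hu, hsu⟩ := hstep
    rw [Set.mem_singleton_iff] at hu
    subst hu
    obtain ⟨t', h1, h2⟩ := shuffle_assoc hsh hsu
    exact ⟨t', h2, pcond_step hh hP h1⟩

/-! ### Structure of S2 -/

def Xp (h k : ℕ) : List AB := [a, b] ++ wa (h-1) ++ wb (k-1)

def TL (h k : ℕ) : List AB := wa (2*h) ++ wb (3*k)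

lemma S2_eq (h k n : ℕ) :
    S2 h k n = wa (3*h) ++ (wb (2*k) ++ (npow (Xp h k) n ++ TL h k)) := by
  have e1 : 3*h = h + 2*h := by ring
  have e2 : 3*k = 2*k + k := by ring
  simp only [S2, Xp, TL, wa, wb, e1, e2, List.replicate_add, List.append_assoc]

lemma cnt_Xp_a (h k : ℕ) (hh : 1 ≤ h) : cnt a (Xp h k) = h := by
  simp [Xp]; omega

lemma cnt_Xp_b (h k : ℕ) (hk : 1 ≤ k) : cnt b (Xp h k) = k := by
  simp [Xp]; omega

lemma cnt_S2_a (h k n : ℕ) (hh : 1 ≤ h) : cnt a (S2 h k n) = n*h + 5*h := by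
  rw [S2_eq]; simp [TL, cnt_Xp_a h k hh]; ring

lemma cnt_S2_b (h k n : ℕ) (hk : 1 ≤ k) : cnt b (S2 h k n) = n*k + 5*k := by
  rw [S2_eq]; simp [TL, cnt_Xp_b h k hk]; ring

/-- Splits of the period `Xp`. -/
lemma Xp_split {h k : ℕ} (hh : 1 ≤ h) (hk : 1 ≤ k) {d₁ d₂ : List AB}
    (hd : Xp h k = d₁ ++ d₂) :
    (cnt b d₁ = 0 ∧ cnt a d₁ ≤ 1) ∨
    (cnt b d₁ = 1 ∧ 1 ≤ cnt a d₁ ∧ cnt a d₁ ≤ h) ∨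
    (cnt b d₁ ≤ k ∧ cnt a d₁ = h) := by
  have hXp : Xp h k = a :: (b :: (wa (h-1) ++ wb (k-1))) := by
    simp [Xp]
  rw [hXp] at hd
  match d₁, hd with
  | [], _ => left; simp
  | [x], hd =>
    simp at hd
    obtain ⟨rfl, -⟩ := hd
    left; simp
  | x :: y :: d, hd =>
    simp at hd
    obtain ⟨rfl, rfl, hd⟩ := hd
    rcases repl_append_split hd with ⟨h1, h2⟩ | ⟨h1, h2⟩
    · right; left
      constructor
      · simp [h1]
      · simp; omega
    · right; right
      constructor
      · simp; omega
      · simp [h1]; omega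

/-- Splitting `npow u i ++ R` as `c₁ ++ c₂`: the prefix consists of `ρ` full copies of
`u` plus a prefix of `u`, or all `i` copies plus a prefix of `R`. -/
lemma npow_split {u : List AB} :
    ∀ (i : ℕ) (R c₁ c₂ : List AB), npow u i ++ R = c₁ ++ c₂ →
    (∃ ρ d₁ d₂, ρ < i ∧ u = d₁ ++ d₂ ∧
       cnt a c₁ = ρ * cnt a u + cnt a d₁ ∧ cnt b c₁ = ρ * cnt b u + cnt b d₁) ∨
    (∃ d₁ d₂, R = d₁ ++ d₂ ∧
       cnt a c₁ = i * cnt a u + cnt a d₁ ∧ cnt b c₁ = i * cnt b u + cnt b d₁) := by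
  intro i
  induction i with
  | zero =>
    intro R c₁ c₂ hR
    right
    exact ⟨c₁, c₂, by simpa [npow] using hR, by simp, by simp⟩
  | succ n ih =>
    intro R c₁ c₂ hR
    have hR' : u ++ (npow u n ++ R) = c₁ ++ c₂ := by
      simpa [npow, List.append_assoc] using hR
    rcases List.append_eq_append_iff.1 hR' with ⟨e, he1, he2⟩ | ⟨e, he1, he2⟩
    · -- c₁ = u ++ e, npow u n ++ R = e ++ c₂
      rcases ih R e c₂ he2 with ⟨ρ, d₁, d₂, hρ, hu, ha, hb⟩ | ⟨d₁, d₂, hRd, ha, hb⟩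
      · left
        refine ⟨ρ + 1, d₁, d₂, by omega, hu, ?_, ?_⟩ <;>
          · subst he1; simp [ha, hb]; ring
      · right
        refine ⟨d₁, d₂, hRd, ?_, ?_⟩ <;>
          · subst he1; simp [ha, hb]; ring
    · -- u = c₁ ++ e
      left
      exact ⟨0, c₁, e, by omega, he1, by simp, by simp⟩

/-- Master staircase lemma: possible letter counts of a prefix of `S2 h k i`. -/
lemma master {h k : ℕ} (hh : 2 ≤ h) (hk : 2 ≤ k) {i : ℕ} {u₁ u₂ : List AB}
    (hu : S2 h k i = u₁ ++ u₂) :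
    (cnt b u₁ = 0) ∨
    (3*h ≤ cnt a u₁ ∧ cnt b u₁ ≤ 2*k) ∨
    (∃ ρ, 1 ≤ ρ ∧ ρ ≤ i ∧
      (((ρ+2)*h + 1 ≤ cnt a u₁ ∧ cnt b u₁ ≤ (ρ+1)*k + 1) ∨
       ((ρ+3)*h ≤ cnt a u₁ ∧ cnt b u₁ ≤ (ρ+2)*k))) ∨
    ((i+5)*h ≤ cnt a u₁) := by
  have hh1 : 1 ≤ h := by omega
  have hk1 : 1 ≤ k := by omega
  rw [S2_eq] at hu
  rcases List.append_eq_append_iff.1 hu with ⟨e, he1, he2⟩ | ⟨e, he1, he2⟩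
  · -- u₁ = wa (3h) ++ e , rest = e ++ u₂
    rcases List.append_eq_append_iff.1 he2 with ⟨f, hf1, hf2⟩ | ⟨f, hf1, hf2⟩
    · -- e = wb (2k) ++ f, npow ++ TL = f ++ u₂
      rcases npow_split i (TL h k) f u₂ hf2 with
        ⟨ρ, d₁, d₂, hρ, hX, ha, hb⟩ | ⟨d₁, d₂, hTL, ha, hb⟩
      · -- inside period ρ+1
        rw [cnt_Xp_a h k hh1] at ha
        rw [cnt_Xp_b h k hk1] at hb
        have hcu_a : cnt a u₁ = 3*h + ρ*h + cnt a d₁ := by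
          subst he1 hf1; simp [ha]; omega
        have hcu_b : cnt b u₁ = 2*k + ρ*k + cnt b d₁ := by
          subst he1 hf1; simp [hb]; omega
        rcases Xp_split hh1 hk1 hX with ⟨hb0, ha1⟩ | ⟨hb1, ha1, ha2⟩ | ⟨hbk, hah⟩
        · -- C1
          rcases Nat.eq_zero_or_pos ρ with rfl | hρ1
          · right; left; constructor <;> omega
          · right; right; left
            refine ⟨ρ, hρ1, by omega, Or.inr ⟨?_, ?_⟩⟩
            · have : (ρ+3)*h = 3*h + ρ*h := by ring
              omega
            · have : (ρ+2)*k = 2*k + ρ*k := by ring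
              omega
        · -- C2
          right; right; left
          refine ⟨ρ+1, by omega, by omega, Or.inl ⟨?_, ?_⟩⟩
          · have : (ρ+1+2)*h = 3*h + ρ*h := by ring
            omega
          · have : (ρ+1+1)*k + 1 = 2*k + ρ*k + 1 := by ring
            omega
        · -- C3
          right; right; left
          refine ⟨ρ+1, by omega, by omega, Or.inr ⟨?_, ?_⟩⟩
          · have : (ρ+1+3)*h = 3*h + ρ*h + h := by ring
            omega
          · have : (ρ+1+2)*k = 2*k + ρ*k + k := by ring
            omega
      · -- inside the tail
        rw [cnt_Xp_a h k hh1] at ha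
        rw [cnt_Xp_b h k hk1] at hb
        have hcu_a : cnt a u₁ = 3*h + i*h + cnt a d₁ := by
          subst he1 hf1; simp [ha]; omega
        have hcu_b : cnt b u₁ = 2*k + i*k + cnt b d₁ := by
          subst he1 hf1; simp [hb]; omega
        rcases repl_append_split (hTL : wa (2*h) ++ wb (3*k) = d₁ ++ d₂) with
          ⟨hb0, ha1⟩ | ⟨ha1, hb1⟩
        · rcases Nat.eq_zero_or_pos i with rfl | hi1
          · right; left; constructor <;> omega
          · right; right; left
            refine ⟨i, hi1, le_refl i, Or.inr ⟨?_, ?_⟩⟩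
            · have : (i+3)*h = 3*h + i*h := by ring
              omega
            · have : (i+2)*k = 2*k + i*k := by ring
              omega
        · right; right; right
          have : (i+5)*h = 3*h + i*h + 2*h := by ring
          omega
    · -- e ++ f = wb 2k : e is within wb 2k
      have hcb : cnt b e ≤ 2*k := by
        have := congrArg (cnt b) hf1
        simp at this
        omega
      have hca : cnt a e = 0 := by
        have := congrArg (cnt a) hf1
        simp at this
        omega
      rcases Nat.eq_zero_or_pos (cnt b e) with hb0 | hb1
      · left
        subst he1; simp [hb0, hca]
      · right; left
        subst he1
        constructor
        · simp [hca]
        · simp; omega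
  · -- u₁ ++ e = wa (3h)
    left
    have := congrArg (cnt b) he1
    simp at this
    omega

/-! Stair corollaries -/

section Stair
variable {h k i : ℕ} (hh : 2 ≤ h) (hk : 2 ≤ k) {u₁ u₂ : List AB}
  (hu : S2 h k i = u₁ ++ u₂)

include hh hk hu

lemma stair1 (hb : 1 ≤ cnt b u₁) : 3*h ≤ cnt a u₁ := by
  rcases master hh hk hu with h0 | ⟨h1, _⟩ | ⟨ρ, hρ1, hρi, ⟨h1, _⟩ | ⟨h1, _⟩⟩ | h1
  · omega
  · omega
  · have : 3*h ≤ (ρ+2)*h := Nat.mul_le_mul_right h (by omega)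
    omega
  · have : 3*h ≤ (ρ+3)*h := Nat.mul_le_mul_right h (by omega)
    omega
  · have : 3*h ≤ (i+5)*h := Nat.mul_le_mul_right h (by omega)
    omega

lemma stair2 {r : ℕ} (hr : r ≤ i) (hb : (r+2)*k ≤ cnt b u₁) : (r+3)*h ≤ cnt a u₁ := by
  have hkpos : 1 ≤ k := by omega
  rcases master hh hk hu with h0 | ⟨h1, h2⟩ | ⟨ρ, hρ1, hρi, ⟨h1, h2⟩ | ⟨h1, h2⟩⟩ | h1
  · have : 0 < (r+2)*k := Nat.mul_pos (by omega) (by omega)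
    omega
  · -- y ≤ 2k and y ≥ (r+2)k forces r = 0
    have hr0 : r = 0 := by
      by_contra hr0
      have : 3*k ≤ (r+2)*k := Nat.mul_le_mul_right k (by omega)
      omega
    subst hr0
    have : (0+3)*h = 3*h := by ring
    omega
  · -- opt1 : y ≤ (ρ+1)k+1 so (r+2)k ≤ (ρ+1)k+1, k ≥ 2 gives ρ ≥ r+1
    have hρr : r + 1 ≤ ρ := by
      by_contra hc
      have hρ' : ρ ≤ r := by omega
      have : (ρ+1)*k + k ≤ (r+2)*k := by
        have : (ρ+2)*k ≤ (r+2)*k := Nat.mul_le_mul_right k (by omega)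
        have e : (ρ+2)*k = (ρ+1)*k + k := by ring
        omega
      omega
    have : (r+3)*h ≤ (ρ+2)*h := Nat.mul_le_mul_right h (by omega)
    omega
  · have hρr : r ≤ ρ := by
      by_contra hc
      have : (ρ+2)*k + k ≤ (r+2)*k := by
        have : (ρ+3)*k ≤ (r+2)*k := Nat.mul_le_mul_right k (by omega)
        have e : (ρ+3)*k = (ρ+2)*k + k := by ring
        omega
      omega
    have : (r+3)*h ≤ (ρ+3)*h := Nat.mul_le_mul_right h (by omega)
    omega
  · have : (r+3)*h ≤ (i+5)*h := Nat.mul_le_mul_right h (by omega)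
    omega

lemma stair3 {r : ℕ} (hr : r < i) (hb : (r+2)*k + 1 ≤ cnt b u₁) :
    (r+3)*h + 1 ≤ cnt a u₁ := by
  rcases master hh hk hu with h0 | ⟨h1, h2⟩ | ⟨ρ, hρ1, hρi, ⟨h1, h2⟩ | ⟨h1, h2⟩⟩ | h1
  · omega
  · have : 2*k ≤ (r+2)*k := Nat.mul_le_mul_right k (by omega)
    omega
  · have hρr : r + 1 ≤ ρ := by
      by_contra hc
      have : (ρ+1)*k ≤ (r+1)*k := Nat.mul_le_mul_right k (by omega)
      have e : (r+2)*k = (r+1)*k + k := by ring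
      omega
    have : (r+3)*h ≤ (ρ+2)*h := Nat.mul_le_mul_right h (by omega)
    omega
  · have hρr : r + 1 ≤ ρ := by
      by_contra hc
      have : (ρ+2)*k ≤ (r+2)*k := Nat.mul_le_mul_right k (by omega)
      omega
    have : (r+4)*h ≤ (ρ+3)*h := Nat.mul_le_mul_right h (by omega)
    have e : (r+4)*h = (r+3)*h + h := by ring
    omega
  · have : (r+6)*h ≤ (i+5)*h := Nat.mul_le_mul_right h (by omega)
    have e : (r+6)*h = (r+3)*h + 3*h := by ring
    omega

lemma stair4 (hb : (i+2)*k + 1 ≤ cnt b u₁) : (i+5)*h ≤ cnt a u₁ := by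
  rcases master hh hk hu with h0 | ⟨h1, h2⟩ | ⟨ρ, hρ1, hρi, ⟨h1, h2⟩ | ⟨h1, h2⟩⟩ | h1
  · omega
  · have : 2*k ≤ (i+2)*k := Nat.mul_le_mul_right k (by omega)
    omega
  · have : (ρ+1)*k + k ≤ (i+2)*k := by
      have : (ρ+2)*k ≤ (i+2)*k := Nat.mul_le_mul_right k (by omega)
      have e : (ρ+2)*k = (ρ+1)*k + k := by ring
      omega
    omega
  · have : (ρ+2)*k ≤ (i+2)*k := Nat.mul_le_mul_right k (by omega)
    omega
  · exact h1

end Stair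

/-! ### The main invariant -/

/-- Invariant at the cut after the `r`-th full period (`e`-cut). -/
def InvE (h k i j : ℕ) (t : List AB) (r : ℕ) : Prop :=
  ∃ v₁ v₂ t₁ t₂ : List AB, S2 h k i = v₁ ++ v₂ ∧ t = t₁ ++ t₂ ∧
    Shuffle v₂ t₂ (npow (Xp h k) (j - r) ++ TL h k) ∧
    cnt a v₁ + cnt a t₁ = (r+3)*h ∧ cnt b v₁ + cnt b t₁ = (r+2)*k ∧
    ((cnt a t₁ = 0 ∧ cnt b t₁ = 0 ∧ r ≤ i) ∨ (cnt b v₁ = 0 ∧ (r+2)*h ≤ cnt a t₁))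

/-- Invariant at the cut just after the single `b` of the `r`-th period (`c`-cut). -/
def InvC (h k i j : ℕ) (t : List AB) (r : ℕ) : Prop :=
  ∃ v₁ v₂ t₁ t₂ : List AB, S2 h k i = v₁ ++ v₂ ∧ t = t₁ ++ t₂ ∧
    Shuffle v₂ t₂ (wa (h-1) ++ (wb (k-1) ++ (npow (Xp h k) (j - r) ++ TL h k))) ∧
    cnt a v₁ + cnt a t₁ = (r+2)*h + 1 ∧ cnt b v₁ + cnt b t₁ = (r+1)*k + 1 ∧
    ((cnt a t₁ = 0 ∧ cnt b t₁ = 0 ∧ r ≤ i) ∨ (cnt b v₁ = 0 ∧ (r+2)*h ≤ cnt a t₁))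

lemma invE_zero {h k i j : ℕ} (hh : 2 ≤ h) (hk : 2 ≤ k) {t : List AB}
    (hP : Pcond h k t) (hsh : Shuffle (S2 h k i) t (S2 h k j)) : InvE h k i j t 0 := by
  have hsh' : Shuffle (S2 h k i) t
      ((wa (3*h) ++ wb (2*k)) ++ (npow (Xp h k) j ++ TL h k)) := by
    rw [S2_eq h k j] at hsh
    simpa [List.append_assoc] using hsh
  obtain ⟨v₁, v₂, t₁, t₂, hv, ht, h1, h2⟩ := shuffle_split hsh' rfl
  have ca1 : cnt a v₁ + cnt a t₁ = 3*h := by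
    have := shuffle_cnt h1 a; simp at this; omega
  have cb1 : cnt b v₁ + cnt b t₁ = 2*k := by
    have := shuffle_cnt h1 b; simp at this; omega
  refine ⟨v₁, v₂, t₁, t₂, hv, ht, by simpa using h2, by omega, by omega, ?_⟩
  rcases Nat.eq_zero_or_pos (cnt b v₁) with y0 | y1
  · right
    refine ⟨y0, ?_⟩
    have hq : 1*k < cnt b t₁ := by omega
    have := hP t₁ t₂ ht 1 hq
    omega
  · have hx := stair1 hh hk hv y1
    have p0 : cnt a t₁ = 0 := by omega
    rcases Nat.eq_zero_or_pos (cnt b t₁) with q0 | q1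
    · exact Or.inl ⟨p0, q0, by omega⟩
    · exfalso
      have := hP t₁ t₂ ht 0 (by omega)
      omega

lemma stepEC {h k i j : ℕ} (hh : 2 ≤ h) (hk : 2 ≤ k) {t : List AB} (hP : Pcond h k t)
    {r : ℕ} (hr : r < j) (IE : InvE h k i j t r) : InvC h k i j t (r+1) := by
  obtain ⟨v₁, v₂, t₁, t₂, hv, ht, hsh, ea, eb, hd⟩ := IE
  have hjr : j - r = (j - (r+1)) + 1 := by omega
  rw [hjr] at hsh
  have hsh' : Shuffle v₂ t₂
      ([a, b] ++ (wa (h-1) ++ (wb (k-1) ++ (npow (Xp h k) (j-(r+1)) ++ TL h k)))) := by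
    simpa [npow, Xp, List.append_assoc] using hsh
  obtain ⟨va, v₂', ta, t₂', hva, hta, hw, hrest⟩ := shuffle_split hsh' rfl
  have hwa : cnt a va + cnt a ta = 1 := by
    have := shuffle_cnt hw a; simp at this; omega
  have hwb : cnt b va + cnt b ta = 1 := by
    have := shuffle_cnt hw b; simp at this; omega
  have hv' : S2 h k i = (v₁ ++ va) ++ v₂' := by rw [hv, hva, List.append_assoc]
  have ht' : t = (t₁ ++ ta) ++ t₂' := by rw [ht, hta, List.append_assoc]
  have e1 : (r+1+2)*h = (r+3)*h := by ring
  have e2 : (r+1+1)*k = (r+2)*k := by ring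
  have e3 : (r+3)*h = (r+2)*h + h := by ring
  have e4 : (r+2+1)*h = (r+3)*h := by ring
  have ea' : cnt a (v₁ ++ va) + cnt a (t₁ ++ ta) = (r+3)*h + 1 := by
    simp only [cnt_append]; omega
  have eb' : cnt b (v₁ ++ va) + cnt b (t₁ ++ ta) = (r+2)*k + 1 := by
    simp only [cnt_append]; omega
  refine ⟨v₁ ++ va, v₂', t₁ ++ ta, t₂', hv', ht', hrest, by omega, by omega, ?_⟩
  rcases hd with ⟨p0, q0, hri⟩ | ⟨y0, hlag⟩
  · -- diagonal case
    by_cases hq : cnt b (t₁ ++ ta) = 0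
    · have hy' : cnt b (v₁ ++ va) = (r+2)*k + 1 := by omega
      rcases Nat.lt_or_ge r i with hlt | hge
      · -- r < i : stays diagonal
        have hs := stair3 hh hk hv' hlt (by omega)
        left
        refine ⟨by omega, hq, by omega⟩
      · -- r = i : contradiction
        have hri2 : r = i := by omega
        exfalso
        have hs := stair4 hh hk hv' (by rw [← hri2]; omega)
        have e5 : (i+5)*h = (i+3)*h + 2*h := by ring
        have e6 : (r+3)*h = (i+3)*h := by rw [hri2]
        omega
    · exfalso
      have hple := hP (t₁ ++ ta) t₂' ht' 0 (by simp only [cnt_append] at *; omega)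
      simp only [cnt_append] at hple
      omega
  · -- lag case
    by_cases hy : cnt b (v₁ ++ va) = 0
    · right
      refine ⟨hy, ?_⟩
      have hq' : (r+2)*k < cnt b (t₁ ++ ta) := by omega
      have := hP (t₁ ++ ta) t₂' ht' (r+2) hq'
      omega
    · exfalso
      have hs := stair1 hh hk hv' (by omega)
      simp only [cnt_append] at hs
      omega

lemma stepCE {h k i j : ℕ} (hh : 2 ≤ h) (hk : 2 ≤ k) {t : List AB} (hP : Pcond h k t)
    {r : ℕ} (hr1 : 1 ≤ r) (hr : r ≤ j) (IC : InvC h k i j t r) : InvE h k i j t r := by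
  obtain ⟨v₁, v₂, t₁, t₂, hv, ht, hsh, ea, eb, hd⟩ := IC
  obtain ⟨va, v₂', ta, t₂', hva, hta, hw, hrest⟩ := shuffle_split hsh rfl
  obtain ⟨vb, v₂'', tb, t₂'', hvb, htb, hw2, hrest2⟩ := shuffle_split hrest rfl
  have hwa1 : cnt a va + cnt a ta = h - 1 := by
    have := shuffle_cnt hw a; simp at this; omega
  have hwb1 : cnt b va + cnt b ta = 0 := by
    have := shuffle_cnt hw b; simp at this; omega
  have hwa2 : cnt a vb + cnt a tb = 0 := by
    have := shuffle_cnt hw2 a; simp at this; omega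
  have hwb2 : cnt b vb + cnt b tb = k - 1 := by
    have := shuffle_cnt hw2 b; simp at this; omega
  have hv' : S2 h k i = (v₁ ++ va ++ vb) ++ v₂'' := by
    rw [hv, hva, hvb]; simp [List.append_assoc]
  have ht' : t = (t₁ ++ ta ++ tb) ++ t₂'' := by
    rw [ht, hta, htb]; simp [List.append_assoc]
  have e3 : (r+3)*h = (r+2)*h + h := by ring
  have e4 : (r+2)*k = (r+1)*k + k := by ring
  have e5 : (r+1+1)*h = (r+2)*h := by ring
  have ea' : cnt a (v₁ ++ va ++ vb) + cnt a (t₁ ++ ta ++ tb) = (r+3)*h := by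
    simp only [cnt_append]; omega
  have eb' : cnt b (v₁ ++ va ++ vb) + cnt b (t₁ ++ ta ++ tb) = (r+2)*k := by
    simp only [cnt_append]; omega
  refine ⟨v₁ ++ va ++ vb, v₂'', t₁ ++ ta ++ tb, t₂'', hv', ht', hrest2, ea', eb', ?_⟩
  rcases hd with ⟨p0, q0, hri⟩ | ⟨y0, hlag⟩
  · -- diagonal case
    by_cases hq : cnt b (t₁ ++ ta ++ tb) = 0
    · have hy' : cnt b (v₁ ++ va ++ vb) = (r+2)*k := by omega
      have hs := stair2 hh hk hv' (by omega : r ≤ i) (by omega)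
      left
      refine ⟨by omega, hq, hri⟩
    · exfalso
      have hple := hP (t₁ ++ ta ++ tb) t₂'' ht' 0 (by simp only [cnt_append] at *; omega)
      simp only [cnt_append] at hple
      omega
  · -- lag case
    by_cases hy : cnt b (v₁ ++ va ++ vb) = 0
    · right
      refine ⟨hy, ?_⟩
      have hq' : (r+1)*k < cnt b (t₁ ++ ta ++ tb) := by omega
      have := hP (t₁ ++ ta ++ tb) t₂'' ht' (r+1) hq'
      omega
    · exfalso
      have hs := stair1 hh hk hv' (by omega)
      simp only [cnt_append] at hs
      omega

lemma invC_all {h k i j : ℕ} (hh : 2 ≤ h) (hk : 2 ≤ k) {t : List AB}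
    (hP : Pcond h k t) (hsh : Shuffle (S2 h k i) t (S2 h k j)) :
    ∀ r, 1 ≤ r → r ≤ j → InvC h k i j t r := by
  intro r
  induction r with
  | zero => omega
  | succ n ih =>
    intro _ hnj
    rcases Nat.eq_zero_or_pos n with rfl | hn
    · exact stepEC hh hk hP (by omega) (invE_zero hh hk hP hsh)
    · exact stepEC hh hk hP (by omega)
        (stepCE hh hk hP hn (by omega) (ih (by omega) (by omega)))

lemma main_contra {h k i j : ℕ} (hh : 2 ≤ h) (hk : 2 ≤ k) {t : List AB}
    (hP : Pcond h k t) (hsh : Shuffle (S2 h k i) t (S2 h k j))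
    (hta : cnt a t + i*h = j*h) (hij : i < j) : False := by
  obtain ⟨v₁, v₂, t₁, t₂, hv, ht, _, ea, eb, hd⟩ :=
    invC_all hh hk hP hsh j (by omega) (le_refl j)
  rcases hd with ⟨_, _, hji⟩ | ⟨_, hlag⟩
  · omega
  · -- (j+2)*h ≤ cnt a t₁ ≤ cnt a t = (j-i)*h
    have h1 : cnt a t₁ ≤ cnt a t := by
      rw [ht]; simp
    have e1 : (j+2)*h = j*h + 2*h := by ring
    have e2 : i*h ≥ 0 := Nat.zero_le _
    omega


theorem stmt3 (h k : ℕ) (hh : 2 ≤ h) (hk : 2 ≤ k) (i j : ℕ) (hi : 1 ≤ i) (hj : 1 ≤ j) :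
    DerivesStar {wa h ++ wb k} (S2 h k i) (S2 h k j) ↔ i = j := by
  constructor
  · intro hd
    obtain ⟨t, hsh, hP⟩ := derives_star_shuffle (by omega : 1 ≤ h) hd
    have hca := shuffle_cnt hsh a
    rw [cnt_S2_a h k j (by omega), cnt_S2_a h k i (by omega)] at hca
    have hta : cnt a t + i*h = j*h := by omega
    rcases lt_trichotomy i j with hij | hij | hij
    · exact absurd hta (fun hta => main_contra hh hk hP hsh hta hij)
    · exact hij
    · exfalso
      have : (j+1)*h ≤ i*h := Nat.mul_le_mul_right h (by omega)
      have e : (j+1)*h = j*h + h := by ring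
      omega
  · rintro rfl
    exact Relation.ReflTransGen.refl

end ShuffleWqo
end

section
/- Let n ≥ 0 be an integer and let I be one of the sets {a^n b, a}, {a^n b, b}, {b^n a, a}, {b^n a, b}, {b a^n, a}, {b a^n, b}, {a b^n, a}, {a b^n, b}. Then LL(I) = L_I^ε, i.e., the shuffle closure of I coincides with the language generated by the unitary grammar associated with I. -/
namespace ShuffleWqo

open AB

/-- One step of the unitary grammar: insert a word of `I` as a factor. -/
def Inserts {α : Type*} (I : Set (List α)) (v w : List α) : Prop :=
  ∃ u ∈ I, ∃ v₁ v₂ : List α, v = v₁ ++ v₂ ∧ w = v₁ ++ u ++ v₂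

/-- The language `L_I^ε` generated by the unitary grammar associated with `I`. -/
def LEps {α : Type*} (I : Set (List α)) : Set (List α) :=
  { w | Relation.ReflTransGen (Inserts I) [] w }


/-!
Inserting a factor is a special shuffle, so `LEps I ⊆ LL I`. Conversely, it suffices to find
a property of words that holds for `ε`, survives shuffling in a word of `I`, and lets every
nonempty word with the property be obtained by inserting a word of `I` into a shorter one with
the property. Swapping the letters and reversing words commute with shuffling and insertion,
so the eight sets reduce to `{aⁿb, a}` and `{aⁿb, b}`.

For `{aⁿb, a}` the property is that every prefix has at least `n` letters `a` per letter `b`: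
the first `b` of such a word is preceded by `aⁿ`, and removing that factor `aⁿb` (or a final
`a` if there is no `b`) keeps the property. For `{aⁿb, b}` it is that `n` divides the number
of `a`s and every suffix has at most `n` letters `a` per letter `b`: if the first `b` is
preceded by at least `n` letters `a` remove `aⁿb`, otherwise remove this `b`.
-/

namespace Shuffle

variable {α β : Type*}

theorem nil_left (u : List α) : Shuffle [] u u := by
  induction u with
  | nil => exact .nil
  | cons _ _ ih => exact .right ih

theorem nil_right (u : List α) : Shuffle u [] u := by
  induction u with
  | nil => exact .nil
  | cons _ _ ih => exact .left ih

theorem append {u₁ v₁ w₁ u₂ v₂ w₂ : List α} (h₁ : Shuffle u₁ v₁ w₁) (h₂ : Shuffle u₂ v₂ w₂) :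
    Shuffle (u₁ ++ u₂) (v₁ ++ v₂) (w₁ ++ w₂) := by
  induction h₁ with
  | nil => exact h₂
  | left _ ih => exact .left ih
  | right _ ih => exact .right ih

theorem count [DecidableEq α] {u v w : List α} (h : Shuffle u v w) (x : α) :
    w.count x = u.count x + v.count x := by
  induction h with
  | nil => rfl
  | left _ ih => simp only [List.count_cons, ih]; omega
  | right _ ih => simp only [List.count_cons, ih]; omega

theorem map (f : α → β) {u v w : List α} (h : Shuffle u v w) :
    Shuffle (u.map f) (v.map f) (w.map f) := by
  induction h with
  | nil => exact .nil
  | left _ ih => exact .left ih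
  | right _ ih => exact .right ih

theorem reverse {u v w : List α} (h : Shuffle u v w) :
    Shuffle u.reverse v.reverse w.reverse := by
  induction h with
  | nil => exact .nil
  | @left x _ _ _ _ ih => simpa using ih.append (nil_right [x])
  | @right x _ _ _ _ ih => simpa using ih.append (nil_left [x])

theorem exists_prefix {u v w p : List α} (h : Shuffle u v w) (hp : p <+: w) :
    ∃ p₁ p₂, p₁ <+: u ∧ p₂ <+: v ∧ Shuffle p₁ p₂ p := by
  induction h generalizing p with
  | nil => exact ⟨[], [], List.nil_prefix, List.nil_prefix, List.prefix_nil.mp hp ▸ .nil⟩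
  | left _ ih =>
    rcases List.prefix_cons_iff.mp hp with rfl | ⟨p', rfl, hp'⟩
    · exact ⟨[], [], List.nil_prefix, List.nil_prefix, .nil⟩
    · obtain ⟨p₁, p₂, h₁, h₂, hs⟩ := ih hp'
      exact ⟨_, p₂, (List.prefix_cons_inj _).mpr h₁, h₂, .left hs⟩
  | right _ ih =>
    rcases List.prefix_cons_iff.mp hp with rfl | ⟨p', rfl, hp'⟩
    · exact ⟨[], [], List.nil_prefix, List.nil_prefix, .nil⟩
    · obtain ⟨p₁, p₂, h₁, h₂, hs⟩ := ih hp'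
      exact ⟨p₁, _, h₁, (List.prefix_cons_inj _).mpr h₂, .right hs⟩

theorem exists_suffix {u v w s : List α} (h : Shuffle u v w) (hs : s <:+ w) :
    ∃ s₁ s₂, s₁ <:+ u ∧ s₂ <:+ v ∧ Shuffle s₁ s₂ s := by
  obtain ⟨p₁, p₂, h₁, h₂, hp⟩ := h.reverse.exists_prefix (List.reverse_prefix.mpr hs)
  refine ⟨p₁.reverse, p₂.reverse, ?_, ?_, by simpa using hp.reverse⟩
  · simpa using List.reverse_prefix.mp (by simpa using h₁)
  · simpa using List.reverse_prefix.mp (by simpa using h₂)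

end Shuffle

section Closures

variable {α : Type*} {I : Set (List α)}

theorem Inserts.derives {v w : List α} (h : Inserts I v w) : Derives I v w := by
  obtain ⟨u, hu, v₁, v₂, rfl, rfl⟩ := h
  exact ⟨u, hu, by simpa using
    (Shuffle.nil_right v₁).append ((Shuffle.nil_left u).append (Shuffle.nil_right v₂))⟩

theorem Inserts.length_lt (hI : [] ∉ I) {v w : List α} (h : Inserts I v w) :
    v.length < w.length := by
  obtain ⟨u, hu, v₁, v₂, rfl, rfl⟩ := h
  have : u ≠ [] := fun h => hI (h ▸ hu)
  simpa [Nat.add_right_comm] using List.length_pos_iff.mpr this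

theorem LEps_subset_LL : LEps I ⊆ LL I := fun _ =>
  Relation.ReflTransGen.mono (fun _ _ => Inserts.derives) _ _

theorem mem_LEps_of_reducible (hI : [] ∉ I) {P : List α → Prop}
    (hred : ∀ w, P w → w ≠ [] → ∃ v, P v ∧ Inserts I v w) {w : List α} (hw : P w) :
    w ∈ LEps I := by
  induction hlen : w.length using Nat.strong_induction_on generalizing w with
  | _ k ih =>
    rcases eq_or_ne w [] with rfl | hne
    · exact .refl
    obtain ⟨v, hv, hvw⟩ := hred w hw hne
    exact .tail (ih _ (hlen ▸ hvw.length_lt hI) hv rfl) hvw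

theorem LL_eq_LEps_of_invariant (hI : [] ∉ I) (P : List α → Prop) (hnil : P [])
    (hstep : ∀ v w, P v → Derives I v w → P w)
    (hred : ∀ w, P w → w ≠ [] → ∃ v, P v ∧ Inserts I v w) : LL I = LEps I := by
  refine subset_antisymm (fun w hw => mem_LEps_of_reducible hI hred ?_) LEps_subset_LL
  induction hw with
  | refl => exact hnil
  | tail _ hvw ih => exact hstep _ _ ih hvw

theorem mem_LL_image {β : Type*} (G : List α → List β) (hnil : G [] = [])
    (hG : ∀ {u v w}, Shuffle u v w → Shuffle (G u) (G v) (G w)) {w : List α} (hw : w ∈ LL I) :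
    G w ∈ LL (G '' I) := by
  induction hw with
  | refl => exact hnil ▸ .refl
  | tail _ hvw ih =>
    obtain ⟨u, hu, h⟩ := hvw
    exact .tail ih ⟨G u, Set.mem_image_of_mem G hu, hG h⟩

theorem mem_LEps_image {β : Type*} (G : List α → List β) (hnil : G [] = [])
    (hG : ∀ {v w}, Inserts I v w → Inserts (G '' I) (G v) (G w)) {w : List α}
    (hw : w ∈ LEps I) : G w ∈ LEps (G '' I) := by
  induction hw with
  | refl => exact hnil ▸ .refl
  | tail _ hvw ih => exact .tail ih (hG hvw)

theorem LL_image_eq_LEps_image (G : List α → List α) (hinv : Function.Involutive G)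
    (hnil : G [] = []) (hsh : ∀ {u v w}, Shuffle u v w → Shuffle (G u) (G v) (G w))
    (hins : ∀ {J : Set (List α)} {v w}, Inserts J v w → Inserts (G '' J) (G v) (G w))
    (h : LL I = LEps I) : LL (G '' I) = LEps (G '' I) := by
  have himg : G '' (G '' I) = I := by rw [Set.image_image]; simp [hinv _]
  ext w
  constructor
  · intro hw
    have := mem_LEps_image G hnil hins (h ▸ himg ▸ mem_LL_image G hnil hsh hw)
    rwa [hinv] at this
  · intro hw
    have := mem_LL_image G hnil hsh (h ▸ himg ▸ mem_LEps_image G hnil hins hw)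
    rwa [hinv] at this

theorem LL_eq_LEps_image_reverse (h : LL I = LEps I) :
    LL (List.reverse '' I) = LEps (List.reverse '' I) := by
  refine LL_image_eq_LEps_image _ List.reverse_reverse rfl Shuffle.reverse ?_ h
  rintro J v w ⟨u, hu, v₁, v₂, rfl, rfl⟩
  exact ⟨u.reverse, Set.mem_image_of_mem _ hu, v₂.reverse, v₁.reverse, by simp, by simp⟩

end Closures

theorem _root_.List.isPrefix_append_cases {α : Type*} {q l₁ l₂ : List α} (hq : q <+: l₁ ++ l₂) :
    q <+: l₁ ∨ ∃ q₂, q₂ <+: l₂ ∧ q = l₁ ++ q₂ := by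
  rcases List.prefix_or_prefix_of_prefix hq (List.prefix_append l₁ l₂) with h | ⟨t, rfl⟩
  · exact .inl h
  · exact .inr ⟨t, (List.prefix_append_right_inj l₁).mp hq, rfl⟩

theorem _root_.List.isSuffix_append_cases {α : Type*} {s l₁ l₂ : List α} (hs : s <:+ l₁ ++ l₂) :
    s <:+ l₂ ∨ ∃ s₁, s₁ <:+ l₁ ∧ s = s₁ ++ l₂ := by
  rcases List.isPrefix_append_cases (l₁ := l₂.reverse) (l₂ := l₁.reverse)
    (by simpa using List.reverse_prefix.mpr hs) with h | ⟨q, hq, hsq⟩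
  · exact .inl (List.reverse_prefix.mp h)
  · refine .inr ⟨q.reverse, by simpa using List.reverse_prefix.mp (by simpa using hq), ?_⟩
    simpa using congrArg List.reverse hsq

def AB.swap : AB → AB
  | a => b
  | b => a

theorem LL_eq_LEps_image_map_swap {I : Set (List AB)} (h : LL I = LEps I) :
    LL (List.map AB.swap '' I) = LEps (List.map AB.swap '' I) := by
  have hinv : Function.Involutive AB.swap := by intro x; cases x <;> rfl
  refine LL_image_eq_LEps_image _ hinv.list_map rfl (Shuffle.map _) ?_ h
  rintro J v w ⟨u, hu, v₁, v₂, rfl, rfl⟩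
  exact ⟨u.map _, Set.mem_image_of_mem _ hu, v₁.map AB.swap, v₂.map AB.swap, by simp, by simp⟩

theorem eq_replicate_or_eq_replicate_append_b_cons (w : List AB) :
    (∃ m, w = List.replicate m a) ∨ ∃ p y, w = List.replicate p a ++ b :: y := by
  induction w with
  | nil => exact .inl ⟨0, rfl⟩
  | cons x w ih =>
    cases x with
    | b => exact .inr ⟨0, w, rfl⟩
    | a =>
      rcases ih with ⟨m, rfl⟩ | ⟨p, y, rfl⟩
      · exact .inl ⟨m + 1, rfl⟩
      · exact .inr ⟨p + 1, y, rfl⟩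

theorem replicate_append_b_cons_eq {n p : ℕ} (h : n ≤ p) (y : List AB) :
    List.replicate p a ++ b :: y = List.replicate (p - n) a ++ (wa n ++ [b]) ++ y := by
  rw [wa, ← List.append_assoc, ← List.replicate_add, Nat.sub_add_cancel h]
  simp

theorem count_wa_append_b (n : ℕ) : (wa n ++ [b]).count a = n * (wa n ++ [b]).count b := by
  simp [wa, List.count_replicate]

section PrefixDominated

def PrefixDominated (n : ℕ) (w : List AB) : Prop :=
  ∀ p, p <+: w → n * p.count b ≤ p.count a

variable {n : ℕ}

theorem PrefixDominated.shuffle {u v w : List AB} (hu : PrefixDominated n u)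
    (hv : PrefixDominated n v) (h : Shuffle u v w) : PrefixDominated n w := by
  intro p hp
  obtain ⟨p₁, p₂, h₁, h₂, hs⟩ := h.exists_prefix hp
  rw [hs.count a, hs.count b, Nat.mul_add]
  exact Nat.add_le_add (hu p₁ h₁) (hv p₂ h₂)

theorem prefixDominated_wa_append_b : PrefixDominated n (wa n ++ [b]) := by
  intro p hp
  rcases List.isPrefix_append_cases hp with h | ⟨q, hq, rfl⟩
  · have : p.count b ≤ (wa n).count b := h.sublist.count_le b
    simp_all [wa, List.count_replicate]
  · have : q.count b ≤ 1 := by simpa using hq.sublist.count_le b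
    have : n * q.count b ≤ n := (Nat.mul_le_mul_left n this).trans_eq (Nat.mul_one n)
    simp [wa, List.count_append, List.count_replicate]
    omega

theorem prefixDominated_a : PrefixDominated n [a] := by
  intro p hp
  have : p.count b ≤ [a].count b := hp.sublist.count_le b
  simp_all

theorem PrefixDominated.of_append_balanced {x u y : List AB}
    (h : PrefixDominated n (x ++ u ++ y)) (hu : u.count a = n * u.count b) :
    PrefixDominated n (x ++ y) := by
  intro p hp
  rcases List.isPrefix_append_cases hp with hpx | ⟨q, hq, rfl⟩
  · exact h p (hpx.trans (by simp))
  · have := h (x ++ u ++ q) (by simpa using hq)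
    simp only [List.count_append, Nat.mul_add] at this ⊢
    omega

theorem PrefixDominated.exists_inserts {w : List AB} (hw : PrefixDominated n w) (hne : w ≠ []) :
    ∃ v, PrefixDominated n v ∧ Inserts {wa n ++ [b], [a]} v w := by
  rcases eq_replicate_or_eq_replicate_append_b_cons w with ⟨_ | m, rfl⟩ | ⟨p, y, rfl⟩
  · exact absurd rfl hne
  · rw [List.replicate_succ'] at hw ⊢
    exact ⟨List.replicate m a, fun q hq => hw q (hq.trans (by simp)), [a], by simp,
      List.replicate m a, [], by simp, by simp⟩
  · have hnp : n ≤ p := by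
      simpa [List.count_replicate] using hw (List.replicate p a ++ [b]) (by simp)
    rw [replicate_append_b_cons_eq hnp] at hw ⊢
    exact ⟨_, hw.of_append_balanced (count_wa_append_b n), _, by simp, _, _, rfl, rfl⟩

theorem LL_eq_LEps_wa_append_b_a (n : ℕ) :
    LL {wa n ++ [b], [a]} = LEps {wa n ++ [b], [a]} := by
  refine LL_eq_LEps_of_invariant (by simp) (PrefixDominated n) (by simp [PrefixDominated]) ?_
    fun w hw hne => hw.exists_inserts hne
  rintro v w hv ⟨u, hu, h⟩
  rcases hu with rfl | rfl
  exacts [hv.shuffle prefixDominated_wa_append_b h, hv.shuffle prefixDominated_a h]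

end PrefixDominated

section SuffixDominated

def SuffixDominated (n : ℕ) (w : List AB) : Prop :=
  ∀ s, s <:+ w → s.count a ≤ n * s.count b

variable {n : ℕ}

theorem SuffixDominated.shuffle {u v w : List AB} (hu : SuffixDominated n u)
    (hv : SuffixDominated n v) (h : Shuffle u v w) : SuffixDominated n w := by
  intro s hs
  obtain ⟨s₁, s₂, h₁, h₂, hsh⟩ := h.exists_suffix hs
  rw [hsh.count a, hsh.count b, Nat.mul_add]
  exact Nat.add_le_add (hu s₁ h₁) (hv s₂ h₂)

theorem suffixDominated_wa_append_b : SuffixDominated n (wa n ++ [b]) := by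
  intro s hs
  rcases List.isSuffix_append_cases hs with h | ⟨s₁, hs₁, rfl⟩
  · have : s.count a ≤ [b].count a := h.sublist.count_le a
    simp_all
  · have : s₁.count a ≤ n := by simpa [wa] using hs₁.sublist.count_le a
    simpa [List.count_append] using this.trans (Nat.le_mul_of_pos_right n (Nat.succ_pos _))

theorem suffixDominated_b : SuffixDominated n [b] := by
  intro s hs
  have : s.count a ≤ [b].count a := hs.sublist.count_le a
  simp_all

theorem SuffixDominated.of_append_balanced {x u y : List AB}
    (h : SuffixDominated n (x ++ u ++ y)) (hu : u.count a = n * u.count b) :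
    SuffixDominated n (x ++ y) := by
  intro s hs
  rcases List.isSuffix_append_cases hs with hsy | ⟨s₁, hs₁, rfl⟩
  · exact h s (hsy.trans (List.suffix_append _ _))
  · have := h (s₁ ++ u ++ y) (by
      simpa only [List.append_assoc] using (List.suffix_append_self_iff (l₃ := u ++ y)).mpr hs₁)
    simp only [List.count_append, Nat.mul_add] at this ⊢
    omega

theorem SuffixDominated.exists_inserts {w : List AB} (hdvd : n ∣ w.count a)
    (hw : SuffixDominated n w) (hne : w ≠ []) :
    ∃ v, (n ∣ v.count a ∧ SuffixDominated n v) ∧ Inserts {wa n ++ [b], [b]} v w := by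
  rcases eq_replicate_or_eq_replicate_append_b_cons w with ⟨m, rfl⟩ | ⟨p, y, rfl⟩
  · have : m = 0 := by simpa [List.count_replicate] using hw _ List.suffix_rfl
    exact absurd (by simp [this]) hne
  have hy : SuffixDominated n y := fun s hs => hw s
    (hs.trans (List.suffix_append_of_suffix (List.suffix_cons b y)))
  simp only [List.count_append, List.count_replicate_self,
    List.count_cons_of_ne (by simp : b ≠ a)] at hdvd
  by_cases hnp : n ≤ p
  · rw [replicate_append_b_cons_eq hnp] at hw ⊢
    refine ⟨_, ⟨?_, hw.of_append_balanced (count_wa_append_b n)⟩, _, by simp, _, _, rfl, rfl⟩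
    have : (List.replicate (p - n) a ++ y).count a = p + y.count a - n := by
      simp only [List.count_append, List.count_replicate_self]
      omega
    exact this ▸ Nat.dvd_sub hdvd dvd_rfl
  · -- The multiple `p + |y|_a` of `n` lies below `n (|y|_b + 1)`, hence below `n |y|_b`.
    have hkey : p + y.count a ≤ n * y.count b := by
      obtain ⟨c, hc⟩ := hdvd
      have : n * c < n * (y.count b + 1) := by
        have := hy y List.suffix_rfl
        rw [Nat.mul_succ]
        omega
      have := Nat.mul_le_mul_left n (Nat.lt_succ_iff.mp (Nat.lt_of_mul_lt_mul_left this))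
      omega
    refine ⟨List.replicate p a ++ y, ⟨by simpa using hdvd, ?_⟩, [b], by simp, _, _, rfl, by simp⟩
    intro s hs
    rcases List.isSuffix_append_cases hs with hsy | ⟨s₁, hs₁, rfl⟩
    · exact hy s hsy
    · have : s₁.count a ≤ p := by simpa using hs₁.sublist.count_le a
      simp only [List.count_append, Nat.mul_add]
      omega

theorem LL_eq_LEps_wa_append_b_b (n : ℕ) :
    LL {wa n ++ [b], [b]} = LEps {wa n ++ [b], [b]} := by
  refine LL_eq_LEps_of_invariant (by simp) (fun w => n ∣ w.count a ∧ SuffixDominated n w)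
    (by simp [SuffixDominated]) ?_ fun w hw hne => hw.2.exists_inserts hw.1 hne
  rintro v w ⟨hdvd, hv⟩ ⟨u, hu, h⟩
  rw [h.count a]
  rcases hu with rfl | rfl
  · exact ⟨dvd_add hdvd (by simp [wa]), hv.shuffle suffixDominated_wa_append_b h⟩
  · exact ⟨by simpa using hdvd, hv.shuffle suffixDominated_b h⟩

end SuffixDominated

theorem stmt11 (n : ℕ) (I : Set (List AB))
    (hI : I = {wa n ++ [b], [a]} ∨ I = {wa n ++ [b], [b]} ∨
          I = {wb n ++ [a], [a]} ∨ I = {wb n ++ [a], [b]} ∨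
          I = {[b] ++ wa n, [a]} ∨ I = {[b] ++ wa n, [b]} ∨
          I = {[a] ++ wb n, [a]} ∨ I = {[a] ++ wb n, [b]}) :
    LL I = LEps I := by
  have h₁ := LL_eq_LEps_wa_append_b_a n
  have h₂ := LL_eq_LEps_wa_append_b_b n
  have h₃ : LL {wb n ++ [a], [a]} = LEps {wb n ++ [a], [a]} := by
    simpa [Set.image_pair, wa, wb, AB.swap] using LL_eq_LEps_image_map_swap h₂
  have h₄ : LL {wb n ++ [a], [b]} = LEps {wb n ++ [a], [b]} := by
    simpa [Set.image_pair, wa, wb, AB.swap] using LL_eq_LEps_image_map_swap h₁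
  rcases hI with rfl | rfl | rfl | rfl | rfl | rfl | rfl | rfl
  · exact h₁
  · exact h₂
  · exact h₃
  · exact h₄
  · simpa [Set.image_pair, wa] using LL_eq_LEps_image_reverse h₁
  · simpa [Set.image_pair, wa] using LL_eq_LEps_image_reverse h₂
  · simpa [Set.image_pair, wb] using LL_eq_LEps_image_reverse h₃
  · simpa [Set.image_pair, wb] using LL_eq_LEps_image_reverse h₄

end ShuffleWqo
end
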